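/- arXiv:1602.04286 — 6 statements merged into one kernel-verified Lean document; each statement's English description precedes it below -/
import Mathlib

section
/- Let G = diag(g1,g2,g3) with g1,g2,g3 > 0 and R_d ∈ SO(3). Then A(R) = (1/2) tr(G (I − R_d^T R)) is nonnegative for all R ∈ SO(3), and A(R) = 0 if and only if R = R_d. -/
open Matrix

noncomputable section

/-- The hat map sending `x ∈ ℝ³` to the skew-symmetric matrix `x̂` with `x̂ y = x × y`. -/
def hat (x : Fin 3 → ℝ) : Matrix (Fin 3) (Fin 3) ℝ :=
  !![0, -x 2, x 1; x 2, 0, -x 0; -x 1, x 0, 0]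

/-- The vee map, inverse of the hat map on skew-symmetric matrices. -/
def vee (A : Matrix (Fin 3) (Fin 3) ℝ) : Fin 3 → ℝ :=
  ![A 2 1, A 0 2, A 1 0]

set_option maxHeartbeats 800000 in
lemma aux_arith (g1 g2 g3 q00 q01 q02 q10 q11 q12 q20 q21 q22 : ℝ)
    (hg1 : 0 < g1) (hg2 : 0 < g2) (hg3 : 0 < g3)
    (c0 : q00 * q00 + q10 * q10 + q20 * q20 = 1)
    (c1 : q01 * q01 + q11 * q11 + q21 * q21 = 1)
    (c2 : q02 * q02 + q12 * q12 + q22 * q22 = 1) :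
    0 ≤ g1 * (1 - q00) + g2 * (1 - q11) + g3 * (1 - q22) ∧
    (g1 * (1 - q00) + g2 * (1 - q11) + g3 * (1 - q22) = 0 →
      q00 = 1 ∧ q11 = 1 ∧ q22 = 1 ∧ q01 = 0 ∧ q02 = 0 ∧ q10 = 0 ∧ q12 = 0 ∧
        q20 = 0 ∧ q21 = 0) := by
  have h00 : q00 ≤ 1 := by nlinarith [sq_nonneg q10, sq_nonneg q20]
  have h11 : q11 ≤ 1 := by nlinarith [sq_nonneg q01, sq_nonneg q21]
  have h22 : q22 ≤ 1 := by nlinarith [sq_nonneg q02, sq_nonneg q12]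
  refine ⟨by nlinarith, fun hz => ?_⟩
  have e00 : q00 = 1 := by nlinarith
  have e11 : q11 = 1 := by nlinarith
  have e22 : q22 = 1 := by nlinarith
  refine ⟨e00, e11, e22, ?_, ?_, ?_, ?_, ?_, ?_⟩
  · nlinarith [sq_nonneg q01, sq_nonneg q21]
  · nlinarith [sq_nonneg q02, sq_nonneg q12]
  · nlinarith [sq_nonneg q10, sq_nonneg q20]
  · nlinarith [sq_nonneg q02, sq_nonneg q12]
  · nlinarith [sq_nonneg q10, sq_nonneg q20]
  · nlinarith [sq_nonneg q01, sq_nonneg q21]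

set_option maxHeartbeats 800000 in
theorem attractive_error_posDef (g1 g2 g3 : ℝ) (hg1 : 0 < g1) (hg2 : 0 < g2) (hg3 : 0 < g3)
    (Rd : Matrix (Fin 3) (Fin 3) ℝ) (hRd : Rdᵀ * Rd = 1) (hRddet : Rd.det = 1)
    (R : Matrix (Fin 3) (Fin 3) ℝ) (hR : Rᵀ * R = 1) (hRdet : R.det = 1) :
    0 ≤ (1 / 2) * trace (Matrix.diagonal ![g1, g2, g3] * (1 - Rdᵀ * R)) ∧
    ((1 / 2) * trace (Matrix.diagonal ![g1, g2, g3] * (1 - Rdᵀ * R)) = 0 ↔ R = Rd) := by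
  have hRdRd : Rd * Rdᵀ = 1 := mul_eq_one_comm.mp hRd
  set Q := Rdᵀ * R with hQdef
  have hQ : Qᵀ * Q = 1 := by
    have h1 : Qᵀ * Q = Rᵀ * (Rd * Rdᵀ) * R := by
      simp [hQdef, Matrix.mul_assoc]
    rw [h1, hRdRd, Matrix.mul_one, hR]
  have hcol : ∀ j, Q 0 j * Q 0 j + Q 1 j * Q 1 j + Q 2 j * Q 2 j
      = (1 : Matrix (Fin 3) (Fin 3) ℝ) j j := by
    intro j
    have := congrFun (congrFun hQ j) j
    simpa [Matrix.mul_apply, Fin.sum_univ_three] using this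
  have c0 := hcol 0
  have c1 := hcol 1
  have c2 := hcol 2
  simp only [Matrix.one_apply_eq] at c0 c1 c2
  have htr : trace (Matrix.diagonal ![g1, g2, g3] * (1 - Q))
      = g1 * (1 - Q 0 0) + g2 * (1 - Q 1 1) + g3 * (1 - Q 2 2) := by
    simp [Matrix.trace, Matrix.mul_apply, Matrix.diagonal, Fin.sum_univ_three,
      Matrix.one_apply]
  obtain ⟨hpos, heq⟩ := aux_arith g1 g2 g3 (Q 0 0) (Q 0 1) (Q 0 2) (Q 1 0) (Q 1 1) (Q 1 2)
    (Q 2 0) (Q 2 1) (Q 2 2) hg1 hg2 hg3 c0 c1 c2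
  constructor
  · rw [htr]; linarith
  constructor
  · intro hz
    rw [htr] at hz
    obtain ⟨e00, e11, e22, z01, z02, z10, z12, z20, z21⟩ := heq (by linarith)
    have hQ1 : Q = 1 := by
      ext i j
      fin_cases i <;> fin_cases j <;>
        simp [Matrix.one_apply, e00, e11, e22, z01, z02, z10, z12, z20, z21]
    have h2 : Rd * Q = Rd * 1 := by rw [hQ1]
    rw [hQdef, ← Matrix.mul_assoc, hRdRd, Matrix.one_mul, Matrix.mul_one] at h2
    exact h2
  · intro hRR
    have hQ1 : Q = 1 := by rw [hQdef, hRR, hRd]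
    rw [hQ1]
    simp
end
end

section
/- Let r, v ∈ S^2, α > 0, θ ∈ (0, π/2), and define B(R) = 1 − (1/α) ln((cos θ − r^T R^T v)/(1 + cos θ)) on the set where r^T R^T v < cos θ. For a variation δR = R η̂ with η ∈ R^3, the directional derivative of B at R equals η · e_{R_B}, where e_{R_B} = ((R^T v) × r)/(α (r^T R^T v − cos θ)). -/
open Matrix

noncomputable section

/-!
Write `w = Rᵀ v`. Since `rᵀ (R M)ᵀ v = w ⬝ (M r)`, the argument of the logarithm is
`(cos θ - w ⬝ (exp (ε η̂) r)) / (1 + cos θ)`, whose inner part has derivative `w ⬝ (η × r)` at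
`ε = 0`. By the triple product this is `-η ⬝ (w × r)`, and the chain rule for `log` gives the
claim.
-/

-- Any norm would do; this one makes square matrices a normed algebra, as the calculus of
-- `NormedSpace.exp` requires.
attribute [local instance] Matrix.linftyOpNormedRing Matrix.linftyOpNormedAlgebra

theorem hat_mulVec (x y : Fin 3 → ℝ) : hat x *ᵥ y = x ⨯₃ y := by
  ext i
  fin_cases i <;> simp [hat, mulVec, dotProduct, Fin.sum_univ_three, cross_apply] <;> ring

theorem dotProduct_mul_transpose_mulVec {R : Type*} [CommSemiring R] {l m n : Type*}
    [Fintype l] [Fintype m] [Fintype n] (A : Matrix l m R) (M : Matrix m n R) (r : n → R)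
    (v : l → R) :
    r ⬝ᵥ ((A * M)ᵀ *ᵥ v) = (Aᵀ *ᵥ v) ⬝ᵥ (M *ᵥ r) := by
  rw [transpose_mul, ← mulVec_mulVec, dotProduct_mulVec, vecMul_transpose, dotProduct_comm]

theorem HasDerivAt.dotProduct_mulVec {𝕜 n : Type*} [NontriviallyNormedField 𝕜] [CompleteSpace 𝕜]
    [Fintype n] [DecidableEq n] {f : 𝕜 → Matrix n n 𝕜} {f' : Matrix n n 𝕜} {x : 𝕜}
    (hf : HasDerivAt f f' x) (w r : n → 𝕜) : HasDerivAt (fun t => w ⬝ᵥ (f t *ᵥ r)) (w ⬝ᵥ (f' *ᵥ r)) x := by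
  let L : Matrix n n 𝕜 →ₗ[𝕜] 𝕜 :=
    { toFun := fun M => w ⬝ᵥ (M *ᵥ r)
      map_add' := fun M N => by simp only [add_mulVec, dotProduct_add]
      map_smul' := fun c M => by simp only [smul_mulVec, dotProduct_smul, RingHom.id_apply] }
  exact (LinearMap.toContinuousLinearMap L).hasFDerivAt.comp_hasDerivAt x hf

theorem hasDerivAt_logBarrier {φ : ℝ → ℝ} {φ' x : ℝ} (hφ : HasDerivAt φ φ' x) (α : ℝ) {c : ℝ}
    (hφx : φ x ≠ c) (hc : 1 + c ≠ 0) :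
    HasDerivAt (fun t => 1 - (1 / α) * Real.log ((c - φ t) / (1 + c)))
      (φ' / (α * (c - φ x))) x := by
  have hquot : (c - φ x) / (1 + c) ≠ 0 := div_ne_zero (sub_ne_zero.mpr hφx.symm) hc
  have hinner := ((hasDerivAt_const x c).sub hφ).div_const (1 + c)
  refine ((hasDerivAt_const x 1).sub ((hinner.log hquot).const_mul (1 / α))).congr_deriv ?_
  rw [div_div_div_cancel_right₀ hc, Pi.sub_apply, div_mul_eq_div_div]
  ring

theorem dirDeriv_barrier_general (r v : Fin 3 → ℝ)
    (α θ : ℝ) (hθ : θ ∈ Set.Ioo 0 (Real.pi / 2))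
    (R : Matrix (Fin 3) (Fin 3) ℝ)
    (hcon : r ⬝ᵥ (Rᵀ *ᵥ v) < Real.cos θ) (η : Fin 3 → ℝ) :
    HasDerivAt
      (fun ε : ℝ => 1 - (1 / α) * Real.log
        ((Real.cos θ - r ⬝ᵥ ((R * NormedSpace.exp (ε • hat η))ᵀ *ᵥ v)) / (1 + Real.cos θ)))
      (η ⬝ᵥ ((1 / (α * (r ⬝ᵥ (Rᵀ *ᵥ v) - Real.cos θ))) • crossProduct (Rᵀ *ᵥ v) r)) 0 := by
  simp only [dotProduct_mul_transpose_mulVec]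
  have hcos : 0 < Real.cos θ := Real.cos_pos_of_mem_Ioo ⟨by linarith [hθ.1, Real.pi_pos], hθ.2⟩
  have hexp : HasDerivAt (fun ε : ℝ => NormedSpace.exp (ε • hat η)) (hat η) 0 := by
    have h := hasDerivAt_exp_smul_const (𝕂 := ℝ) (hat η) 0
    rwa [zero_smul, NormedSpace.exp_zero, one_mul] at h
  set w := Rᵀ *ᵥ v
  have hφ0 : w ⬝ᵥ (NormedSpace.exp ((0 : ℝ) • hat η) *ᵥ r) = r ⬝ᵥ w := by
    rw [zero_smul, NormedSpace.exp_zero, one_mulVec, dotProduct_comm]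
  have hB := hasDerivAt_logBarrier (hexp.dotProduct_mulVec w r) α (c := Real.cos θ)
    (hφ0 ▸ hcon.ne) (by linarith)
  rw [hφ0, hat_mulVec, triple_product_permutation, ← cross_anticomm w r, dotProduct_neg,
    ← neg_sub (r ⬝ᵥ w), mul_neg, neg_div_neg_eq] at hB
  refine hB.congr_deriv ?_
  rw [dotProduct_smul, smul_eq_mul]
  ring

theorem dirDeriv_barrier (r v : Fin 3 → ℝ) (hr : r ⬝ᵥ r = 1) (hv : v ⬝ᵥ v = 1)
    (α θ : ℝ) (hα : 0 < α) (hθ : θ ∈ Set.Ioo 0 (Real.pi / 2))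
    (R : Matrix (Fin 3) (Fin 3) ℝ) (hR : Rᵀ * R = 1) (hRdet : R.det = 1)
    (hcon : r ⬝ᵥ (Rᵀ *ᵥ v) < Real.cos θ) (η : Fin 3 → ℝ) :
    HasDerivAt
      (fun ε : ℝ => 1 - (1 / α) * Real.log
        ((Real.cos θ - r ⬝ᵥ ((R * NormedSpace.exp (ε • hat η))ᵀ *ᵥ v)) / (1 + Real.cos θ)))
      (η ⬝ᵥ ((1 / (α * (r ⬝ᵥ (Rᵀ *ᵥ v) - Real.cos θ))) • crossProduct (Rᵀ *ᵥ v) r)) 0 :=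
  dirDeriv_barrier_general r v α θ hθ R hcon η
end
end

section
/- Suppose R : R → SO(3) satisfies Ṙ = R Ω̂ for a curve Ω : R → R^3, and R_d ∈ SO(3) is constant. Let A(t) = (1/2) tr(G(I − R_d^T R(t))) with G = diag(g1,g2,g3), g_i > 0. Then dA/dt = e_{R_A} · Ω, where e_{R_A} = (1/2)(G R_d^T R − R^T R_d G)^∨. -/
/-!
Since `A = ½ tr G - ½ tr (G R_dᵀ R)`, the kinematics `Ṙ = R Ω̂` give
`dA/dt = -½ tr (M Ω̂)` with `M = G R_dᵀ R`. Pairing a matrix with a hat matrix only sees its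
skew part: `tr (M x̂) = -(M - Mᵀ)^∨ · x`, and `Mᵀ = Rᵀ R_d G` because `G` is diagonal.
-/

open Matrix

noncomputable section

attribute [local instance] Matrix.frobeniusNormedAddCommGroup Matrix.frobeniusNormedSpace

section MatrixCalculus

variable {𝕜 : Type*} [NontriviallyNormedField 𝕜] [CompleteSpace 𝕜] {n : Type*} [Fintype n]
  {f : 𝕜 → Matrix n n 𝕜} {f' : Matrix n n 𝕜} {t : 𝕜}

theorem HasDerivAt.matrix_mul_left [DecidableEq n] (M : Matrix n n 𝕜) (hf : HasDerivAt f f' t) :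
    HasDerivAt (fun s => M * f s) (M * f') t :=
  (LinearMap.mulLeft 𝕜 M).toContinuousLinearMap.hasFDerivAt.comp_hasDerivAt t hf

theorem HasDerivAt.matrix_trace (hf : HasDerivAt f f' t) :
    HasDerivAt (fun s => trace (f s)) (trace f') t :=
  (traceLinearMap n 𝕜 𝕜).toContinuousLinearMap.hasFDerivAt.comp_hasDerivAt t hf

end MatrixCalculus

theorem trace_mul_hat (M : Matrix (Fin 3) (Fin 3) ℝ) (x : Fin 3 → ℝ) :
    trace (M * hat x) = -(vee (M - Mᵀ) ⬝ᵥ x) := by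
  simp only [trace, hat, diag_apply, mul_apply, of_apply, cons_val', cons_val_fin_one,
    Fin.sum_univ_three, cons_val_zero, cons_val_one, cons_val, mul_zero, zero_add, mul_neg,
    add_zero, dotProduct, vee, Matrix.sub_apply, transpose_apply, neg_add_rev]
  ring

theorem deriv_A_general (g1 g2 g3 : ℝ)
    (Rd : Matrix (Fin 3) (Fin 3) ℝ)
    (R : ℝ → Matrix (Fin 3) (Fin 3) ℝ) (Ω : ℝ → Fin 3 → ℝ)
    (hkin : ∀ t, HasDerivAt R (R t * hat (Ω t)) t) (t : ℝ) :
    HasDerivAt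
      (fun s => (1 / 2) * trace (Matrix.diagonal ![g1, g2, g3] * (1 - Rdᵀ * R s)))
      (((1 / 2 : ℝ) • vee (Matrix.diagonal ![g1, g2, g3] * Rdᵀ * R t -
        (R t)ᵀ * Rd * Matrix.diagonal ![g1, g2, g3])) ⬝ᵥ Ω t) t := by
  set G := Matrix.diagonal ![g1, g2, g3]
  have hA := ((((hasDerivAt_const t 1).sub ((hkin t).matrix_mul_left Rdᵀ)).matrix_mul_left
    G).matrix_trace).const_mul (1 / 2 : ℝ)
  refine hA.congr_deriv ?_
  have hGRdR_transpose : (G * Rdᵀ * R t)ᵀ = (R t)ᵀ * Rd * G := by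
    simp [G, Matrix.mul_assoc]
  rw [← hGRdR_transpose, smul_dotProduct, smul_eq_mul, zero_sub, Matrix.mul_neg, trace_neg,
    ← Matrix.mul_assoc, ← Matrix.mul_assoc, trace_mul_hat]
  ring

theorem deriv_A (g1 g2 g3 : ℝ) (hg1 : 0 < g1) (hg2 : 0 < g2) (hg3 : 0 < g3)
    (Rd : Matrix (Fin 3) (Fin 3) ℝ) (hRd : Rdᵀ * Rd = 1) (hRddet : Rd.det = 1)
    (R : ℝ → Matrix (Fin 3) (Fin 3) ℝ) (Ω : ℝ → Fin 3 → ℝ)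
    (hSO : ∀ t, (R t)ᵀ * R t = 1 ∧ (R t).det = 1)
    (hkin : ∀ t, HasDerivAt R (R t * hat (Ω t)) t) (t : ℝ) :
    HasDerivAt
      (fun s => (1 / 2) * trace (Matrix.diagonal ![g1, g2, g3] * (1 - Rdᵀ * R s)))
      (((1 / 2 : ℝ) • vee (Matrix.diagonal ![g1, g2, g3] * Rdᵀ * R t -
        (R t)ᵀ * Rd * Matrix.diagonal ![g1, g2, g3])) ⬝ᵥ Ω t) t :=
  deriv_A_general g1 g2 g3 Rd R Ω hkin t
end
end

section
/- Suppose Ṙ = R Ω̂ and R_d is constant. Then d/dt e_{R_A} = E(R, R_d) Ω, where e_{R_A} = (1/2)(G R_d^T R − R^T R_d G)^∨ and E(R,R_d) = (1/2)(tr(R^T R_d G) I − R^T R_d G), with G = diag(g1,g2,g3), g_i > 0. -/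
open Matrix

noncomputable section

attribute [local instance] Matrix.frobeniusNormedAddCommGroup Matrix.frobeniusNormedSpace

lemma vee_add (A B : Matrix (Fin 3) (Fin 3) ℝ) : vee (A + B) = vee A + vee B := by
  funext i; fin_cases i <;> simp [vee]

lemma vee_smul (c : ℝ) (A : Matrix (Fin 3) (Fin 3) ℝ) : vee (c • A) = c • vee A := by
  funext i; fin_cases i <;> simp [vee]

lemma hat_transpose (x : Fin 3 → ℝ) : (hat x)ᵀ = -(hat x) := by
  funext i j; fin_cases i <;> fin_cases j <;> simp [hat]

lemma key (A : Matrix (Fin 3) (Fin 3) ℝ) (x : Fin 3 → ℝ) :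
    vee (Aᵀ * hat x + hat x * A) =
      (trace A • (1 : Matrix (Fin 3) (Fin 3) ℝ) - A) *ᵥ x := by
  funext i; fin_cases i <;>
    simp [vee, hat, Matrix.mul_apply, Matrix.mulVec, dotProduct, Fin.sum_univ_three,
      Matrix.trace, Matrix.diag, Matrix.one_apply, Matrix.vecMul] <;> ring

/-- The linear map `M ↦ (1/2) • vee (G Rdᵀ M − Mᵀ Rd G)`. -/
def Lmap (G Rd : Matrix (Fin 3) (Fin 3) ℝ) :
    Matrix (Fin 3) (Fin 3) ℝ →ₗ[ℝ] (Fin 3 → ℝ) where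
  toFun M := (1 / 2 : ℝ) • vee (G * Rdᵀ * M - Mᵀ * Rd * G)
  map_add' M N := by
    have h : G * Rdᵀ * (M + N) - (M + N)ᵀ * Rd * G =
        (G * Rdᵀ * M - Mᵀ * Rd * G) + (G * Rdᵀ * N - Nᵀ * Rd * G) := by
      rw [Matrix.transpose_add]; noncomm_ring
    rw [h, vee_add, smul_add]
  map_smul' c M := by
    have h : G * Rdᵀ * (c • M) - (c • M)ᵀ * Rd * G =
        c • (G * Rdᵀ * M - Mᵀ * Rd * G) := by
      rw [Matrix.transpose_smul, Matrix.mul_smul, Matrix.smul_mul, Matrix.smul_mul, smul_sub]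
    rw [h, vee_smul, smul_comm]
    rfl

theorem deriv_eRA (g1 g2 g3 : ℝ) (hg1 : 0 < g1) (hg2 : 0 < g2) (hg3 : 0 < g3)
    (Rd : Matrix (Fin 3) (Fin 3) ℝ) (hRd : Rdᵀ * Rd = 1) (hRddet : Rd.det = 1)
    (R : ℝ → Matrix (Fin 3) (Fin 3) ℝ) (Ω : ℝ → Fin 3 → ℝ)
    (hSO : ∀ t, (R t)ᵀ * R t = 1 ∧ (R t).det = 1)
    (hkin : ∀ t, HasDerivAt R (R t * hat (Ω t)) t) (t : ℝ) :
    let G : Matrix (Fin 3) (Fin 3) ℝ := Matrix.diagonal ![g1, g2, g3]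
    HasDerivAt
      (fun s => (1 / 2 : ℝ) • vee (G * Rdᵀ * R s - (R s)ᵀ * Rd * G))
      (((1 / 2 : ℝ) • (trace ((R t)ᵀ * Rd * G) • (1 : Matrix (Fin 3) (Fin 3) ℝ) -
        (R t)ᵀ * Rd * G)) *ᵥ Ω t) t := by
  intro G
  have hL := ((Lmap G Rd).toContinuousLinearMap.hasFDerivAt
      (x := R t)).comp_hasDerivAt t (hkin t)
  have hval : (Lmap G Rd) (R t * hat (Ω t)) =
      ((1 / 2 : ℝ) • (trace ((R t)ᵀ * Rd * G) • (1 : Matrix (Fin 3) (Fin 3) ℝ) -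
        (R t)ᵀ * Rd * G)) *ᵥ Ω t := by
    show (1 / 2 : ℝ) • vee (G * Rdᵀ * (R t * hat (Ω t)) -
        (R t * hat (Ω t))ᵀ * Rd * G) = _
    have h : G * Rdᵀ * (R t * hat (Ω t)) - (R t * hat (Ω t))ᵀ * Rd * G =
        ((R t)ᵀ * Rd * G)ᵀ * hat (Ω t) + hat (Ω t) * ((R t)ᵀ * Rd * G) := by
      have hG : Gᵀ = G := Matrix.diagonal_transpose _
      rw [Matrix.transpose_mul, hat_transpose, Matrix.transpose_mul, Matrix.transpose_mul,
        Matrix.transpose_transpose, hG]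
      noncomm_ring
    rw [h, key, Matrix.smul_mulVec]
  rw [← hval]
  exact hL
end
end

section
/- Let G = diag(g1,g2,g3) with g_i > 0 and R, R_d ∈ SO(3). Then the Frobenius norm of E(R,R_d) = (1/2)(tr(R^T R_d G) I − R^T R_d G) satisfies ‖E‖_F² ≤ (1/4)(tr(G²) + tr(G)²) ≤ (1/2) tr(G)², hence the operator norm satisfies ‖E‖ ≤ tr(G)/√2. -/
open Matrix

noncomputable section

/-- The operator 2-norm of a 3×3 real matrix, induced by the Euclidean norm on ℝ³. -/
def opNorm (A : Matrix (Fin 3) (Fin 3) ℝ) : ℝ :=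
  ‖Matrix.toEuclideanCLM (𝕜 := ℝ) A‖

lemma opNorm_le_sqrt_trace (A : Matrix (Fin 3) (Fin 3) ℝ) :
    ‖Matrix.toEuclideanCLM (𝕜 := ℝ) A‖ ≤ Real.sqrt (trace (Aᵀ * A)) := by
  have htr : trace (Aᵀ * A) = ∑ i : Fin 3, ∑ j : Fin 3, (A i j) ^ 2 := by
    simp only [Matrix.trace, Matrix.mul_apply, Matrix.diag, Matrix.transpose_apply, sq]
    rw [Finset.sum_comm]
  refine ContinuousLinearMap.opNorm_le_bound _ (Real.sqrt_nonneg _) fun x => ?_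
  have hx : (WithLp.equiv _ _ ((Matrix.toEuclideanCLM (𝕜 := ℝ) A) x)) =
      A *ᵥ (WithLp.equiv _ _ x) := Matrix.ofLp_toEuclideanCLM A x
  have hnx : ‖x‖ = Real.sqrt (∑ j : Fin 3, (x j) ^ 2) := by
    rw [EuclideanSpace.norm_eq]
    congr 1
    simp [sq_abs, sq]
  have hny : ‖(Matrix.toEuclideanCLM (𝕜 := ℝ) A) x‖
      = Real.sqrt (∑ i : Fin 3, (∑ j : Fin 3, A i j * x j) ^ 2) := by
    rw [EuclideanSpace.norm_eq]
    congr 1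
    refine Finset.sum_congr rfl fun i _ => ?_
    have : ((Matrix.toEuclideanCLM (𝕜 := ℝ) A) x) i = (A *ᵥ (WithLp.equiv _ _ x)) i :=
      congrFun hx i
    rw [this]
    simp [Matrix.mulVec, dotProduct, sq_abs]
  rw [hny, hnx, htr, ← Real.sqrt_mul (by positivity)]
  apply Real.sqrt_le_sqrt
  rw [Finset.sum_mul]
  refine Finset.sum_le_sum fun i _ => ?_
  exact Finset.sum_mul_sq_le_sq_mul_sq _ _ _

set_option maxHeartbeats 2000000
theorem E_bound (g1 g2 g3 : ℝ) (hg1 : 0 < g1) (hg2 : 0 < g2) (hg3 : 0 < g3)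
    (Rd : Matrix (Fin 3) (Fin 3) ℝ) (hRd : Rdᵀ * Rd = 1) (hRddet : Rd.det = 1)
    (R : Matrix (Fin 3) (Fin 3) ℝ) (hR : Rᵀ * R = 1) (hRdet : R.det = 1) :
    let G : Matrix (Fin 3) (Fin 3) ℝ := Matrix.diagonal ![g1, g2, g3]
    let E : Matrix (Fin 3) (Fin 3) ℝ :=
      (1 / 2 : ℝ) • (trace (Rᵀ * Rd * G) • (1 : Matrix (Fin 3) (Fin 3) ℝ) - Rᵀ * Rd * G)
    trace (Eᵀ * E) ≤ (1 / 4) * (trace (G * G) + trace G ^ 2) ∧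
    (1 / 4) * (trace (G * G) + trace G ^ 2) ≤ (1 / 2) * trace G ^ 2 ∧
    opNorm E ≤ trace G / Real.sqrt 2 := by
  intro G E
  set Q : Matrix (Fin 3) (Fin 3) ℝ := Rᵀ * Rd with hQdef
  have hRR : R * Rᵀ = 1 := mul_eq_one_comm.mp hR
  have hQ : Qᵀ * Q = 1 := by
    have : Qᵀ * Q = Rdᵀ * (R * Rᵀ) * Rd := by
      simp only [hQdef, transpose_mul, transpose_transpose]
      rw [Matrix.mul_assoc, Matrix.mul_assoc, Matrix.mul_assoc]
    rw [this, hRR, Matrix.mul_one, hRd]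
  set t : ℝ := trace (Rᵀ * Rd * G) with htdef
  have hGT : Gᵀ = G := Matrix.diagonal_transpose _
  have hEdef : E = (1 / 2 : ℝ) • (t • (1 : Matrix (Fin 3) (Fin 3) ℝ) - Q * G) := rfl
  -- key trace identity
  have hQGQG : (Q * G)ᵀ * (Q * G) = G * G := by
    rw [transpose_mul, hGT, Matrix.mul_assoc, ← Matrix.mul_assoc Qᵀ Q G, hQ, Matrix.one_mul]
  have htrQGT : trace ((Q * G)ᵀ) = t := by rw [trace_transpose]
  have hGdef : G = Matrix.diagonal ![g1, g2, g3] := rfl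
  have h1 : trace (Q * G) = t := rfl
  have key : trace (Eᵀ * E) = (1 / 4) * (t ^ 2 + trace (G * G)) := by
    rw [hEdef]
    simp only [transpose_smul, transpose_sub, smul_mul_assoc, Matrix.mul_smul,
      sub_mul, mul_sub, transpose_smul, Matrix.transpose_one, Matrix.one_mul,
      Matrix.mul_one, trace_smul, trace_sub, trace_one, hQGQG, htrQGT, h1,
      smul_eq_mul, Fintype.card_fin]
    ring
  have hdiag : ∀ i : Fin 3, Q i i ^ 2 ≤ 1 := by
    intro i
    have h := congrFun (congrFun hQ i) i
    simp only [Matrix.mul_apply, Matrix.transpose_apply, Matrix.one_apply_eq] at h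
    have hs := Finset.single_le_sum (f := fun k => Q k i * Q k i)
      (fun k _ => mul_self_nonneg _) (Finset.mem_univ i)
    rw [h] at hs
    have hs' : Q i i * Q i i ≤ 1 := hs
    rw [sq]
    exact hs'
  have ht : t = Q 0 0 * g1 + Q 1 1 * g2 + Q 2 2 * g3 := by
    rw [← h1, hGdef]
    simp [Matrix.trace, Matrix.diag, Matrix.mul_diagonal, Fin.sum_univ_three]
  have htG : trace G = g1 + g2 + g3 := by
    rw [hGdef, Matrix.trace_diagonal]
    simp [Fin.sum_univ_three]
  have htGG : trace (G * G) = g1 ^ 2 + g2 ^ 2 + g3 ^ 2 := by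
    rw [hGdef, Matrix.diagonal_mul_diagonal, Matrix.trace_diagonal]
    simp [Fin.sum_univ_three, sq]
  clear_value Q t G E
  have b0u : Q 0 0 ≤ 1 := by nlinarith [hdiag 0, sq_nonneg (Q 0 0 - 1)]
  have b0l : -1 ≤ Q 0 0 := by nlinarith [hdiag 0, sq_nonneg (Q 0 0 + 1)]
  have b1u : Q 1 1 ≤ 1 := by nlinarith [hdiag 1, sq_nonneg (Q 1 1 - 1)]
  have b1l : -1 ≤ Q 1 1 := by nlinarith [hdiag 1, sq_nonneg (Q 1 1 + 1)]
  have b2u : Q 2 2 ≤ 1 := by nlinarith [hdiag 2, sq_nonneg (Q 2 2 - 1)]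
  have b2l : -1 ≤ Q 2 2 := by nlinarith [hdiag 2, sq_nonneg (Q 2 2 + 1)]
  have ht2 : t ^ 2 ≤ trace G ^ 2 := by
    rw [ht, htG]
    have e1 : 0 ≤ (1 - Q 0 0) * g1 := mul_nonneg (by linarith) hg1.le
    have e2 : 0 ≤ (1 - Q 1 1) * g2 := mul_nonneg (by linarith) hg2.le
    have e3 : 0 ≤ (1 - Q 2 2) * g3 := mul_nonneg (by linarith) hg3.le
    have f1 : 0 ≤ (1 + Q 0 0) * g1 := mul_nonneg (by linarith) hg1.le
    have f2 : 0 ≤ (1 + Q 1 1) * g2 := mul_nonneg (by linarith) hg2.le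
    have f3 : 0 ≤ (1 + Q 2 2) * g3 := mul_nonneg (by linarith) hg3.le
    have hS1 : 0 ≤ (g1 + g2 + g3) - (Q 0 0 * g1 + Q 1 1 * g2 + Q 2 2 * g3) := by
      linarith [e1, e2, e3]
    have hS2 : 0 ≤ (g1 + g2 + g3) + (Q 0 0 * g1 + Q 1 1 * g2 + Q 2 2 * g3) := by
      linarith [f1, f2, f3]
    linarith [mul_nonneg hS1 hS2]
  have hGGle : trace (G * G) ≤ trace G ^ 2 := by
    rw [htGG, htG]
    linarith [mul_pos hg1 hg2, mul_pos hg1 hg3, mul_pos hg2 hg3]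
  refine ⟨?_, ?_, ?_⟩
  · rw [key]; linarith
  · linarith
  · have hb := opNorm_le_sqrt_trace E
    have htG0 : 0 ≤ trace G := by rw [htG]; positivity
    have hle : trace (Eᵀ * E) ≤ (trace G / Real.sqrt 2) ^ 2 := by
      rw [key, div_pow, Real.sq_sqrt (by norm_num : (0:ℝ) ≤ 2)]
      linarith
    calc opNorm E ≤ Real.sqrt (trace (Eᵀ * E)) := hb
      _ ≤ Real.sqrt ((trace G / Real.sqrt 2) ^ 2) := Real.sqrt_le_sqrt hle
      _ = trace G / Real.sqrt 2 := Real.sqrt_sq (by positivity)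
end
end

section
/- Let r, v ∈ S^2 and R ∈ SO(3) with x := v^T R r satisfying −1 ≤ x ≤ β < cos θ for θ ∈ (0, π/2). Then tr(c^T c) = (1 − 2x² + x⁴)/(x − cos θ)², where c = (R^T v̂ R r v^T R r̂)/(r^T R^T v − cos θ), and consequently tr(c^T c) ≤ (1 − x²)²/(β − cos θ)². -/
open Matrix

noncomputable section

lemma trace_vmv (a w : Fin 3 → ℝ) :
    trace ((vecMulVec a w)ᵀ * vecMulVec a w) = (a ⬝ᵥ a) * (w ⬝ᵥ w) := by
  simp [trace, vecMulVec, mul_apply, dotProduct, Fin.sum_univ_three, transpose_apply]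
  ring

lemma vmv_mul (a b : Fin 3 → ℝ) (M : Matrix (Fin 3) (Fin 3) ℝ) :
    vecMulVec a b * M = vecMulVec a (vecMul b M) := by
  ext i j
  simp [vecMulVec, mul_apply, vecMul, dotProduct, Fin.sum_univ_three]
  ring

lemma hat_norm (y z : Fin 3 → ℝ) :
    (hat y *ᵥ z) ⬝ᵥ (hat y *ᵥ z) = (y ⬝ᵥ y) * (z ⬝ᵥ z) - (y ⬝ᵥ z) ^ 2 := by
  simp [hat, mulVec, dotProduct, Fin.sum_univ_three]
  ring

lemma vecMul_hat_norm (b r : Fin 3 → ℝ) :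
    (vecMul b (hat r)) ⬝ᵥ (vecMul b (hat r)) = (r ⬝ᵥ r) * (b ⬝ᵥ b) - (r ⬝ᵥ b) ^ 2 := by
  simp [hat, vecMul, dotProduct, Fin.sum_univ_three]
  ring

lemma mv_dot (B : Matrix (Fin 3) (Fin 3) ℝ) (u w : Fin 3 → ℝ) :
    (B *ᵥ u) ⬝ᵥ (B *ᵥ w) = u ⬝ᵥ ((Bᵀ * B) *ᵥ w) := by
  simp [mulVec, mul_apply, dotProduct, Fin.sum_univ_three]; ring

theorem trace_cTc (r v : Fin 3 → ℝ) (hr : r ⬝ᵥ r = 1) (hv : v ⬝ᵥ v = 1)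
    (R : Matrix (Fin 3) (Fin 3) ℝ) (hR : Rᵀ * R = 1) (hRdet : R.det = 1)
    (θ β : ℝ) (hθ : θ ∈ Set.Ioo 0 (Real.pi / 2))
    (hx1 : -1 ≤ v ⬝ᵥ (R *ᵥ r)) (hxβ : v ⬝ᵥ (R *ᵥ r) ≤ β) (hβ : β < Real.cos θ) :
    let x : ℝ := v ⬝ᵥ (R *ᵥ r)
    let c : Matrix (Fin 3) (Fin 3) ℝ :=
      (1 / (x - Real.cos θ)) •
        (vecMulVec (Rᵀ *ᵥ (hat v *ᵥ (R *ᵥ r))) (Rᵀ *ᵥ v) * hat r)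
    trace (cᵀ * c) = (1 - 2 * x ^ 2 + x ^ 4) / (x - Real.cos θ) ^ 2 ∧
    trace (cᵀ * c) ≤ (1 - x ^ 2) ^ 2 / (β - Real.cos θ) ^ 2 := by
  intro x c
  have hRRT : R * Rᵀ = 1 := mul_eq_one_comm.mp hR
  have hRr : (R *ᵥ r) ⬝ᵥ (R *ᵥ r) = 1 := by rw [mv_dot, hR, one_mulVec, hr]
  set s := 1 / (x - Real.cos θ) with hs
  set a := Rᵀ *ᵥ (hat v *ᵥ (R *ᵥ r)) with hadef
  set w := vecMul (Rᵀ *ᵥ v) (hat r) with hwdef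
  have hc : c = s • vecMulVec a w := by
    show s • _ = _
    rw [vmv_mul]
  have ha : a ⬝ᵥ a = 1 - x ^ 2 := by
    rw [hadef, mv_dot, transpose_transpose, hRRT, one_mulVec, hat_norm, hv, hRr]
    ring
  have hb : (Rᵀ *ᵥ v) ⬝ᵥ (Rᵀ *ᵥ v) = 1 := by
    rw [mv_dot, transpose_transpose, hRRT, one_mulVec, hv]
  have hrb : r ⬝ᵥ (Rᵀ *ᵥ v) = x := by
    rw [dotProduct_mulVec, ← mulVec_transpose, transpose_transpose, dotProduct_comm]
  have hw : w ⬝ᵥ w = 1 - x ^ 2 := by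
    rw [hwdef, vecMul_hat_norm, hr, hb, hrb]; ring
  have htr : trace (cᵀ * c) = s ^ 2 * ((1 - x ^ 2) * (1 - x ^ 2)) := by
    rw [hc, transpose_smul, smul_mul_assoc, mul_smul_comm, smul_smul, trace_smul,
      trace_vmv, ha, hw, smul_eq_mul]
    ring
  have hxc : x - Real.cos θ ≠ 0 := by
    have : x < Real.cos θ := lt_of_le_of_lt hxβ hβ
    linarith
  have heq : trace (cᵀ * c) = (1 - 2 * x ^ 2 + x ^ 4) / (x - Real.cos θ) ^ 2 := by
    rw [htr, hs]
    field_simp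
    ring
  refine ⟨heq, ?_⟩
  rw [heq]
  have hβne : β - Real.cos θ ≠ 0 := by linarith
  have hb2 : (0:ℝ) < (β - Real.cos θ) ^ 2 :=
    lt_of_le_of_ne (sq_nonneg _) (Ne.symm (pow_ne_zero 2 hβne))
  have hx2 : (0:ℝ) < (x - Real.cos θ) ^ 2 :=
    lt_of_le_of_ne (sq_nonneg _) (Ne.symm (pow_ne_zero 2 hxc))
  rw [div_le_div_iff₀ hx2 hb2]
  have h1 : (β - Real.cos θ) ^ 2 ≤ (x - Real.cos θ) ^ 2 := by nlinarith
  nlinarith [sq_nonneg (1 - x ^ 2), mul_le_mul_of_nonneg_left h1 (sq_nonneg (1 - x ^ 2))]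
end
end
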